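/- arXiv:1204.6065 — 5 statements merged into one kernel-verified Lean document; each statement's English description precedes it below -/
import Mathlib

section
/- Let n ≥ 3 be an integer and m > 0. For r > r_h, let α(r), c(r) > 0 be the solutions of Bray's matching conditions α·c^{n−1} = φ_m(r)^{2(n−1)/(n−2)} r^{n−1} and α/c = φ_m(r)^{−n/(n−2)} (1 − m/(2 r^{n−2}))/r. Then there exist constants r₀ > r_h and K > 0 (depending only on n and m) such that for all r ≥ r₀ one has | c(r)^n / r^n − 1 − ((2n−2)/(n−2))·m·r^{2−n} | ≤ K·r^{4−2n}. (That is, c^n = r^n (1 + ((2n−2)/(n−2)) m / r^{n−2} + O(1/r^{2n−4})).) -/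
open Real

/-- Quadratic error estimate for `(1+u)^p / (1-u)` near `u = 0`. -/
lemma bray_aux_est (p u : ℝ) (hp1 : 1 ≤ p) (hp7 : p ≤ 7) (hu0 : 0 < u) (hu : u ≤ 1/14) :
    |(1+u) ^ p / (1-u) - 1 - (p+1)*u| ≤ 120 * u^2 := by
  have hpu : p * u ≤ 1/2 := by nlinarith
  have hpu0 : 0 < p * u := by positivity
  have h1u : (0:ℝ) < 1 - u := by linarith
  have h1pu : (0:ℝ) < 1 - p * u := by linarith
  have hA_lb : 1 + p * u ≤ (1+u) ^ p :=
    one_add_mul_self_le_rpow_one_add (by linarith) hp1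
  have hA_ub : (1+u) ^ p ≤ 1 + p*u + 2*(p*u)^2 := by
    have e1 : (1+u) ^ p ≤ Real.exp (u * p) := by
      have h1 : (1+u : ℝ) ^ p ≤ (Real.exp u) ^ p := by
        apply Real.rpow_le_rpow (by linarith) _ (by linarith)
        have := Real.add_one_le_exp u
        linarith
      have h2 : (Real.exp u) ^ p = Real.exp (u * p) := by
        rw [Real.rpow_def_of_pos (Real.exp_pos u), Real.log_exp]
      linarith [h1, h2.le, h2.ge]
    have e2 : Real.exp (u * p) ≤ (1 - p*u)⁻¹ := by
      have h3 : 1 - p*u ≤ Real.exp (-(u*p)) := by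
        have := Real.add_one_le_exp (-(u*p))
        linarith [this]
      have h4 : Real.exp (-(u*p)) = (Real.exp (u*p))⁻¹ := Real.exp_neg _
      rw [h4] at h3
      rw [← inv_inv (Real.exp (u*p))]
      exact inv_anti₀ (by positivity) h3
    have e3 : (1 - p*u)⁻¹ ≤ 1 + p*u + 2*(p*u)^2 := by
      rw [inv_le_iff_one_le_mul₀ h1pu]
      nlinarith
    linarith
  have hkey : (1+u) ^ p / (1-u) - 1 - (p+1)*u
      = ((1+u) ^ p - (1 + p*u) + (p+1)*u^2) / (1-u) := by
    field_simp
    ring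
  rw [hkey, abs_div, abs_of_pos h1u,
    abs_of_nonneg (by nlinarith : (0:ℝ) ≤ (1+u) ^ p - (1 + p*u) + (p+1)*u^2)]
  rw [div_le_iff₀ h1u]
  nlinarith [sq_nonneg u, sq_nonneg (p*u), mul_pos hu0 hu0,
    mul_nonneg (mul_nonneg (by linarith : (0:ℝ) ≤ 7-p) (by linarith : (0:ℝ) ≤ 7+p)) (sq_nonneg u),
    mul_nonneg (by linarith : (0:ℝ) ≤ 1/14 - u) (sq_nonneg u)]

/-- Bray's matching conditions in the `n`-dimensional spatial Schwarzschild manifold of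
mass `m > 0`: expansion of `c(r)^n / r^n`. -/
theorem bray_c_expansion (n : ℕ) (hn : 3 ≤ n) (m : ℝ) (hm : 0 < m)
    (rh : ℝ) (hrh : rh = (m / 2) ^ ((1 : ℝ) / ((n : ℝ) - 2)))
    (α c : ℝ → ℝ)
    (hαpos : ∀ r, rh < r → 0 < α r)
    (hcpos : ∀ r, rh < r → 0 < c r)
    (harea : ∀ r, rh < r →
      α r * c r ^ ((n : ℝ) - 1) =
        (1 + m / (2 * r ^ ((n : ℝ) - 2))) ^ (2 * ((n : ℝ) - 1) / ((n : ℝ) - 2))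
          * r ^ ((n : ℝ) - 1))
    (hmean : ∀ r, rh < r →
      α r / c r =
        (1 + m / (2 * r ^ ((n : ℝ) - 2))) ^ (-(n : ℝ) / ((n : ℝ) - 2))
          * (1 - m / (2 * r ^ ((n : ℝ) - 2))) / r) :
    ∃ r₀ K : ℝ, rh < r₀ ∧ 0 < K ∧ ∀ r, r₀ ≤ r →
      |c r ^ n / r ^ n - 1 - ((2 * (n : ℝ) - 2) / ((n : ℝ) - 2)) * m * r ^ ((2 : ℝ) - (n : ℝ))|
        ≤ K * r ^ ((4 : ℝ) - 2 * (n : ℝ)) := by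
  set N : ℝ := (n : ℝ) with hN
  have hN3 : (3:ℝ) ≤ N := by rw [hN]; exact_mod_cast hn
  have hN2 : (1:ℝ) ≤ N - 2 := by linarith
  have hN2' : N - 2 ≠ 0 := by linarith
  set p : ℝ := (3*N - 2)/(N - 2) with hpdef
  have hp1 : 1 ≤ p := by
    rw [hpdef, le_div_iff₀ (by linarith)]
    linarith
  have hp7 : p ≤ 7 := by
    rw [hpdef, div_le_iff₀ (by linarith)]
    linarith
  refine ⟨(7*m) ^ ((1:ℝ)/(N-2)), 30*m^2, ?_, by positivity, ?_⟩
  · rw [hrh]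
    exact Real.rpow_lt_rpow (by positivity) (by linarith) (by positivity)
  intro r hr₀r
  have hr₀pos : (0:ℝ) < (7*m) ^ ((1:ℝ)/(N-2)) := Real.rpow_pos_of_pos (by linarith) _
  have hr : 0 < r := lt_of_lt_of_le hr₀pos hr₀r
  have hrhr : rh < r := by
    refine lt_of_lt_of_le ?_ hr₀r
    rw [hrh]
    exact Real.rpow_lt_rpow (by positivity) (by linarith) (by positivity)
  set X : ℝ := r ^ (N - 2) with hXdef
  have hXpos : 0 < X := Real.rpow_pos_of_pos hr _
  have hr₀pow : ((7*m) ^ ((1:ℝ)/(N-2))) ^ (N-2) = 7*m := by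
    rw [← Real.rpow_mul (by positivity)]
    rw [one_div, inv_mul_cancel₀ hN2', Real.rpow_one]
  have hXbig : 7*m ≤ X := by
    rw [← hr₀pow]
    exact Real.rpow_le_rpow hr₀pos.le hr₀r (by linarith)
  set u : ℝ := m / (2 * X) with hudef
  have hu0 : 0 < u := by positivity
  have hu14 : u ≤ 1/14 := by
    rw [hudef, div_le_div_iff₀ (by positivity) (by norm_num)]
    linarith
  have hu1 : u < 1 := by linarith
  have h1u : (0:ℝ) < 1 - u := by linarith
  have hcr : 0 < c r := hcpos r hrhr
  have hαr : 0 < α r := hαpos r hrhr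
  set φ : ℝ := 1 + u with hφdef
  have hφpos : 0 < φ := by positivity
  have h1 := harea r hrhr
  have h2 := hmean r hrhr
  -- identity : c r ^ n = (α r * c r ^ (N-1)) / (α r / c r)
  have hcn : c r ^ (N - 1) * c r = c r ^ n := by
    calc c r ^ (N-1) * c r = c r ^ (N-1) * c r ^ (1:ℝ) := by rw [Real.rpow_one]
    _ = c r ^ (N-1+1) := (Real.rpow_add hcr _ _).symm
    _ = c r ^ (N:ℝ) := by ring_nf
    _ = c r ^ n := Real.rpow_natCast _ n
  have hrn : r ^ (N - 1) * r = r ^ n := by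
    calc r ^ (N-1) * r = r ^ (N-1) * r ^ (1:ℝ) := by rw [Real.rpow_one]
    _ = r ^ (N-1+1) := (Real.rpow_add hr _ _).symm
    _ = r ^ (N:ℝ) := by ring_nf
    _ = r ^ n := Real.rpow_natCast _ n
  have hφcomb : φ ^ (2*(N-1)/(N-2)) * φ ^ (N/(N-2)) = φ ^ p := by
    rw [← Real.rpow_add hφpos, hpdef]
    congr 1
    field_simp
    ring
  have hφneg : φ ^ (-(N)/(N-2)) = (φ ^ (N/(N-2)))⁻¹ := by
    rw [neg_div, Real.rpow_neg hφpos.le]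
  have hcnr : c r ^ ((n:ℝ) - 1) = c r ^ (N - 1) := rfl
  rw [← hXdef] at h1 h2
  rw [← hudef] at h1 h2
  rw [← hφdef] at h1 h2
  have hE : (c r ^ n : ℝ) * (1 - u) = φ ^ p * (r ^ n : ℝ) := by
    have hid : (c r ^ n : ℝ) = (α r * c r ^ (N-1)) / (α r / c r) := by
      rw [← hcn]
      field_simp
    rw [hid, h1, h2, hφneg, ← hφcomb, ← hrn]
    have hφN : 0 < φ ^ (N/(N-2)) := Real.rpow_pos_of_pos hφpos _
    set a := φ ^ (2*(N-1)/(N-2)) with ha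
    set b := φ ^ (N/(N-2)) with hb
    field_simp
  have hdiv : (c r ^ n : ℝ) / (r ^ n : ℝ) = φ ^ p / (1 - u) := by
    rw [div_eq_div_iff (by positivity) (ne_of_gt h1u)]
    exact hE
  -- rewrite the linear term
  have hlin : ((2 * N - 2) / (N - 2)) * m * r ^ ((2:ℝ) - N) = (p + 1) * u := by
    have h2N : r ^ ((2:ℝ) - N) = X⁻¹ := by
      rw [show (2:ℝ) - N = -(N-2) by ring, Real.rpow_neg hr.le]
    rw [h2N, hudef, hpdef]
    field_simp
    ring
  have hquad : (30*m^2) * r ^ ((4:ℝ) - 2*N) = 120 * u^2 := by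
    have h4 : r ^ ((4:ℝ) - 2*N) = X⁻¹ * X⁻¹ := by
      rw [show (4:ℝ) - 2*N = (-(N-2)) + (-(N-2)) by ring, Real.rpow_add hr,
        Real.rpow_neg hr.le]
    rw [h4, hudef]
    field_simp
    ring
  rw [hdiv]
  calc |φ ^ p / (1-u) - 1 - (2*N-2)/(N-2) * m * r ^ ((2:ℝ)-N)|
      = |(1+u) ^ p / (1-u) - 1 - (p+1)*u| := by rw [hlin, hφdef]
    _ ≤ 120 * u^2 := bray_aux_est p u hp1 hp7 hu0 hu14
    _ = (30*m^2) * r ^ ((4:ℝ) - 2*N) := hquad.symm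
end

section
/- Let n ≥ 3 be an integer and m > 0. For r > r_h, let α(r), c(r) > 0 be the solutions of Bray's matching conditions α·c^{n−1} = φ_m(r)^{2(n−1)/(n−2)} r^{n−1} and α/c = φ_m(r)^{−n/(n−2)} (1 − m/(2 r^{n−2}))/r. Then there exist constants r₀ > r_h and K > 0 (depending only on n and m) such that for all r ≥ r₀ one has | α(r) − 1 + ((n−1)/n)·m·r^{2−n} | ≤ K·r^{4−2n}. (That is, α = 1 − ((n−1)/n) m / r^{n−2} + O(1/r^{2n−4}).) -/
/-!
Multiplying the area condition by the `(n-1)`-st power of the mean-curvature condition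
eliminates `c`: with `u = m / (2 r^{n-2})` one gets `α^n = ((1-u)/(1+u))^{n-1}`, the powers of
`φ_m` cancelling exactly. The expansion of `((1-u)/(1+u))^β` to first order in `u`, with a
quadratic remainder, follows from Bernoulli's inequality applied to `(1-u)/(1+u)` and to its
reciprocal.
-/

open Real

lemma abs_rpow_one_sub_div_one_add_sub_le {β u : ℝ} (hβ0 : 0 ≤ β) (hβ1 : β ≤ 1)
    (hu0 : 0 ≤ u) (hu : u ≤ 1 / 2) :
    |((1 - u) / (1 + u)) ^ β - 1 + 2 * β * u| ≤ 4 * u ^ 2 := by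
  have h1u : 0 < 1 - u := by linarith
  have h1u' : 0 < 1 + u := by linarith
  have hupper : ((1 - u) / (1 + u)) ^ β ≤ 1 + β * (-(2 * u) / (1 + u)) := by
    have := rpow_one_add_le_one_add_mul_self (s := -(2 * u) / (1 + u))
      (by rw [le_div_iff₀ h1u']; linarith) hβ0 hβ1
    convert this using 2
    field_simp; ring
  have hlower : (((1 - u) / (1 + u)) ^ β)⁻¹ ≤ 1 + β * (2 * u / (1 - u)) := by
    have := rpow_one_add_le_one_add_mul_self (s := 2 * u / (1 - u))
      (by linarith [show 0 ≤ 2 * u / (1 - u) by positivity]) hβ0 hβ1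
    rw [← inv_rpow (by positivity), inv_div]
    convert this using 2
    field_simp; ring
  set y := ((1 - u) / (1 + u)) ^ β
  have hy : 0 < y := by positivity
  rw [abs_le]
  constructor
  · rw [inv_le_iff_one_le_mul₀ hy] at hlower
    rw [mul_div_assoc', add_div' _ _ _ h1u.ne', div_mul_eq_mul_div, le_div_iff₀ h1u] at hlower
    nlinarith [mul_nonneg hβ0 hu0, mul_nonneg (mul_nonneg hβ0 hu0) hu0]
  · rw [mul_div_assoc', add_div' _ _ _ h1u'.ne', le_div_iff₀ h1u'] at hupper
    nlinarith [mul_nonneg hβ0 hu0, mul_nonneg (mul_nonneg hβ0 hu0) hu0]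

lemma rpow_one_add_eq_mul_mul_div_rpow {a c k : ℝ} (ha : 0 < a) (hc : 0 < c) :
    a ^ (1 + k) = a * c ^ k * (a / c) ^ k := by
  rw [rpow_add ha, rpow_one, div_rpow ha.le hc.le]
  field_simp

lemma eq_rpow_of_bray_matching {N u r a c : ℝ} (hN : 2 < N) (hu : 0 < 1 + u) (hr : 0 < r)
    (ha : 0 < a) (hc : 0 < c)
    (harea : a * c ^ (N - 1) = (1 + u) ^ (2 * (N - 1) / (N - 2)) * r ^ (N - 1))
    (hmean : a / c = (1 + u) ^ (-N / (N - 2)) * (1 - u) / r) :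
    a = ((1 - u) / (1 + u)) ^ ((N - 1) / N) := by
  have h1u : 0 < 1 - u := by
    have : 0 < (1 + u) ^ (-N / (N - 2)) * (1 - u) / r := hmean ▸ div_pos ha hc
    exact pos_of_mul_pos_right ((div_pos_iff_of_pos_right hr).1 this) (by positivity)
  have hpow : a ^ N = ((1 - u) / (1 + u)) ^ (N - 1) := by
    have hexp : 2 * (N - 1) / (N - 2) + -N / (N - 2) * (N - 1) = -(N - 1) := by
      field_simp [(by linarith : N - 2 ≠ 0)]; ring
    calc a ^ N = a * c ^ (N - 1) * (a / c) ^ (N - 1) := by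
          rw [← rpow_one_add_eq_mul_mul_div_rpow ha hc]; ring_nf
      _ = (1 + u) ^ (2 * (N - 1) / (N - 2) + -N / (N - 2) * (N - 1)) * (1 - u) ^ (N - 1)
            * (r ^ (N - 1) / r ^ (N - 1)) := by
          rw [harea, hmean, div_rpow (by positivity) hr.le, mul_rpow (by positivity) h1u.le,
            ← rpow_mul hu.le, rpow_add hu]
          ring
      _ = ((1 - u) / (1 + u)) ^ (N - 1) := by
          rw [hexp, div_self (by positivity), rpow_neg hu.le, div_rpow h1u.le hu.le]
          ring
  rw [← rpow_rpow_inv ha.le (by linarith : N ≠ 0), hpow, ← rpow_mul (by positivity),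
    ← div_eq_mul_inv]

/-- Bray's matching conditions in the `n`-dimensional spatial Schwarzschild manifold of
mass `m > 0`: expansion of `α(r)`. -/
theorem bray_alpha_expansion (n : ℕ) (hn : 3 ≤ n) (m : ℝ) (hm : 0 < m)
    (rh : ℝ) (hrh : rh = (m / 2) ^ ((1 : ℝ) / ((n : ℝ) - 2)))
    (α c : ℝ → ℝ)
    (hαpos : ∀ r, rh < r → 0 < α r)
    (hcpos : ∀ r, rh < r → 0 < c r)
    (harea : ∀ r, rh < r →
      α r * c r ^ ((n : ℝ) - 1) =
        (1 + m / (2 * r ^ ((n : ℝ) - 2))) ^ (2 * ((n : ℝ) - 1) / ((n : ℝ) - 2))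
          * r ^ ((n : ℝ) - 1))
    (hmean : ∀ r, rh < r →
      α r / c r =
        (1 + m / (2 * r ^ ((n : ℝ) - 2))) ^ (-(n : ℝ) / ((n : ℝ) - 2))
          * (1 - m / (2 * r ^ ((n : ℝ) - 2))) / r) :
    ∃ r₀ K : ℝ, rh < r₀ ∧ 0 < K ∧ ∀ r, r₀ ≤ r →
      |α r - 1 + ((n : ℝ) - 1) / (n : ℝ) * m * r ^ ((2 : ℝ) - (n : ℝ))|
        ≤ K * r ^ ((4 : ℝ) - 2 * (n : ℝ)) := by
  have hN : (2 : ℝ) < n := by exact_mod_cast hn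
  have hN2 : 0 < (n : ℝ) - 2 := sub_pos.2 hN
  -- beyond `r₀` one has `m / (2 r^{n-2}) ≤ 1/2`
  set r₀ := m ^ ((1 : ℝ) / ((n : ℝ) - 2))
  have hr₀ : r₀ ^ ((n : ℝ) - 2) = m := by
    rw [← rpow_mul hm.le, one_div_mul_cancel hN2.ne', rpow_one]
  have hrh₀ : rh < r₀ := hrh ▸ rpow_lt_rpow (by positivity) (by linarith) (by positivity)
  refine ⟨r₀, m ^ 2, hrh₀, by positivity, fun r hr => ?_⟩
  have hr0 : 0 < r := (by positivity : 0 < r₀).trans_le hr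
  have hrh_lt : rh < r := hrh₀.trans_le hr
  set x := r ^ ((n : ℝ) - 2) with hx
  have hmx : m ≤ x := hr₀ ▸ rpow_le_rpow (by positivity) hr hN2.le
  have hu0 : 0 ≤ m / (2 * x) := by positivity
  have hu : m / (2 * x) ≤ 1 / 2 := by
    rw [div_le_iff₀ (by positivity)]; linarith
  have hinv : r ^ ((2 : ℝ) - n) = x⁻¹ := by
    rw [hx, ← rpow_neg hr0.le]; ring_nf
  have hsq : r ^ ((4 : ℝ) - 2 * n) = (x⁻¹) ^ 2 := by
    rw [← hinv, ← rpow_natCast, ← rpow_mul hr0.le]; ring_nf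
  rw [eq_rpow_of_bray_matching hN (by positivity) hr0 (hαpos r hrh_lt) (hcpos r hrh_lt)
    (harea r hrh_lt) (hmean r hrh_lt), hinv, hsq]
  convert abs_rpow_one_sub_div_one_add_sub_le (β := ((n : ℝ) - 1) / n)
    (by bound) (by bound) hu0 hu using 1
  · congr 1; ring
  · ring
end

section
/- Let n ≥ 3 be an integer, Θ > 0, ρ ≥ 1 and γ ∈ (0,1]. Let μ be a Borel measure on ℝⁿ with μ({x : |x| ≥ ρ}) < ∞ and μ({x : ρ ≤ |x| ≤ r}) ≤ Θ r^{n−1} for all r ≥ ρ. Then for every β ∈ (0, n−2+γ): ∫_{{x : |x| ≥ ρ}} |x|^{−(n−2+γ)} dμ(x) ≤ ρ^{−β} · μ({x : |x| ≥ ρ})^{(1−γ+β)/(n−1)} · ((n−2+γ) Θ / β)^{(n−2+γ−β)/(n−1)}. -/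
/-!
Hölder's inequality against the constant function `1` on `S = {|x| ≥ ρ}` gives
`∫_S |x|^{-q} ≤ (∫_S |x|^{-s})^a μ(S)^b` with `a = (q - β)/(n - 1)`, `b = 1 - a` and `s = q/a`.
Since `s > n - 1`, the layer-cake formula turns the growth bound `μ(S ∩ B_r) ≤ Θ r^{n-1}` into
`μ(S ∩ {|x|^{-s} > t}) ≤ Θ t^{-(n-1)/s}` for `t ≤ ρ^{-s}` (and `0` beyond), which integrates to
`∫_S |x|^{-s} ≤ s/(s - (n-1)) · Θ · ρ^{n-1-s}`; raising this to the power `a` gives the claim.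
-/

open MeasureTheory Set ENNReal

variable {α : Type*} [MeasurableSpace α] {μ : Measure α}

theorem lintegral_rpow_le_mul_measure_univ_rpow {f : α → ℝ≥0∞} (hf : AEMeasurable f μ)
    {a b : ℝ} (ha : 0 ≤ a) (hb : 0 ≤ b) (hab : a + b = 1) :
    ∫⁻ x, f x ^ a ∂μ ≤ (∫⁻ x, f x ∂μ) ^ a * μ univ ^ b := by
  simpa using ENNReal.lintegral_mul_norm_pow_le (g := 1) hf aemeasurable_const ha hb hab

theorem lintegral_Ioc_zero_rpow_neg {c : ℝ} (hc : c < 1) {A : ℝ} (hA : 0 ≤ A) :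
    ∫⁻ t in Ioc 0 A, ENNReal.ofReal (t ^ (-c)) = ENNReal.ofReal (A ^ (1 - c) / (1 - c)) := by
  have hint : IntegrableOn (fun t : ℝ => t ^ (-c)) (Ioc 0 A) :=
    (intervalIntegrable_iff_integrableOn_Ioc_of_le hA).mp
      (intervalIntegral.intervalIntegrable_rpow' (by linarith))
  rw [← ofReal_integral_eq_lintegral_ofReal hint
      ((ae_restrict_iff' measurableSet_Ioc).2 (.of_forall fun t ht => Real.rpow_nonneg ht.1.le _)),
    ← intervalIntegral.integral_of_le hA, integral_rpow (Or.inl (by linarith)),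
    Real.zero_rpow (by linarith)]
  ring_nf

section TailDecay

variable {f : α → ℝ} {ρ Θ k s : ℝ}

theorem measure_restrict_lt_rpow_neg_le_indicator (hf : Measurable f) (hρ : 0 < ρ) (hs : 0 < s)
    (hμ : ∀ r, ρ ≤ r → μ {x | ρ ≤ f x ∧ f x ≤ r} ≤ ENNReal.ofReal (Θ * r ^ k))
    {t : ℝ} (ht : 0 < t) :
    μ.restrict {x | ρ ≤ f x} {x | t < f x ^ (-s)} ≤
      (Ioc 0 (ρ ^ (-s))).indicator (fun t => ENNReal.ofReal (Θ * t ^ (-(k / s)))) t := by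
  have hs' : -s < 0 := neg_neg_of_pos hs
  rw [Measure.restrict_apply (measurableSet_lt measurable_const (hf.pow_const _))]
  by_cases htA : t ≤ ρ ^ (-s)
  · have hsub : {x | t < f x ^ (-s)} ∩ {x | ρ ≤ f x} ⊆
        {x | ρ ≤ f x ∧ f x ≤ t ^ (-s)⁻¹} := fun x hx =>
      ⟨hx.2, (Real.le_rpow_inv_iff_of_neg (hρ.trans_le hx.2) ht hs').2 hx.1.le⟩
    have hexp : (-s)⁻¹ * k = -(k / s) := by field_simp
    rw [indicator_of_mem (show t ∈ Ioc 0 (ρ ^ (-s)) from ⟨ht, htA⟩)]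
    calc _ ≤ _ := measure_mono hsub
      _ ≤ ENNReal.ofReal (Θ * (t ^ (-s)⁻¹) ^ k) :=
        hμ _ ((Real.le_rpow_inv_iff_of_neg hρ ht hs').2 htA)
      _ = ENNReal.ofReal (Θ * t ^ (-(k / s))) := by rw [← Real.rpow_mul ht.le, hexp]
  · have hempty : {x | t < f x ^ (-s)} ∩ {x | ρ ≤ f x} = ∅ := by
      refine eq_empty_of_forall_notMem fun x hx => htA ?_
      exact hx.1.le.trans (Real.rpow_le_rpow_of_nonpos hρ hx.2 hs'.le)
    simp [hempty]

theorem setLIntegral_rpow_neg_le (hf : Measurable f) (hρ : 0 < ρ) (hs : 0 < s) (hks : k < s)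
    (hμ : ∀ r, ρ ≤ r → μ {x | ρ ≤ f x ∧ f x ≤ r} ≤ ENNReal.ofReal (Θ * r ^ k)) :
    ∫⁻ x in {x | ρ ≤ f x}, ENNReal.ofReal (f x ^ (-s)) ∂μ ≤
      ENNReal.ofReal (s / (s - k) * Θ * ρ ^ (k - s)) := by
  have hc : k / s < 1 := (div_lt_one hs).2 hks
  have hA : 0 ≤ ρ ^ (-s) := Real.rpow_nonneg hρ.le _
  have hvalue : Θ * ((ρ ^ (-s)) ^ (1 - k / s) / (1 - k / s)) = s / (s - k) * Θ * ρ ^ (k - s) := by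
    rw [← Real.rpow_mul hρ.le, show -s * (1 - k / s) = k - s by field_simp; ring,
      show 1 - k / s = (s - k) / s by field_simp]
    field_simp
  have hS : MeasurableSet {x | ρ ≤ f x} := measurableSet_le measurable_const hf
  have hnonneg : 0 ≤ᵐ[μ.restrict {x | ρ ≤ f x}] fun x => f x ^ (-s) :=
    (ae_restrict_iff' hS).2 (.of_forall fun x hx => Real.rpow_nonneg (hρ.le.trans hx) _)
  rw [lintegral_eq_lintegral_meas_lt _ hnonneg (hf.pow_const _).aemeasurable]
  calc _ ≤ ∫⁻ t in Ioi 0,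
        (Ioc 0 (ρ ^ (-s))).indicator (fun t => ENNReal.ofReal (Θ * t ^ (-(k / s)))) t :=
        setLIntegral_mono' measurableSet_Ioi fun t ht =>
          measure_restrict_lt_rpow_neg_le_indicator hf hρ hs hμ ht
    _ = ∫⁻ t in Ioc 0 (ρ ^ (-s)), ENNReal.ofReal Θ * ENNReal.ofReal (t ^ (-(k / s))) := by
        rw [lintegral_indicator measurableSet_Ioc, Measure.restrict_restrict measurableSet_Ioc,
          inter_eq_left.2 Ioc_subset_Ioi_self]
        refine setLIntegral_congr_fun measurableSet_Ioc fun t ht => ?_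
        exact ENNReal.ofReal_mul' (Real.rpow_nonneg ht.1.le _)
    _ = _ := by
        rw [lintegral_const_mul' _ _ ofReal_ne_top, lintegral_Ioc_zero_rpow_neg hc hA,
          ← ENNReal.ofReal_mul' (div_nonneg (Real.rpow_nonneg hA _) (sub_nonneg.2 hc.le)),
          hvalue]

theorem setLIntegral_rpow_neg_mul_le (hf : Measurable f) (hρ : 0 < ρ) (hs : 0 < s) (hks : k < s)
    (hμ : ∀ r, ρ ≤ r → μ {x | ρ ≤ f x ∧ f x ≤ r} ≤ ENNReal.ofReal (Θ * r ^ k))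
    {a : ℝ} (ha₀ : 0 ≤ a) (ha₁ : a ≤ 1) :
    ∫⁻ x in {x | ρ ≤ f x}, ENNReal.ofReal (f x ^ (-(s * a))) ∂μ ≤
      ENNReal.ofReal (s / (s - k) * Θ * ρ ^ (k - s)) ^ a * μ {x | ρ ≤ f x} ^ (1 - a) := by
  have hS : MeasurableSet {x | ρ ≤ f x} := measurableSet_le measurable_const hf
  calc _ = ∫⁻ x in {x | ρ ≤ f x}, ENNReal.ofReal (f x ^ (-s)) ^ a ∂μ := by
        refine setLIntegral_congr_fun hS fun x hx => ?_
        have hfx : 0 ≤ f x := hρ.le.trans hx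
        rw [ENNReal.ofReal_rpow_of_nonneg (Real.rpow_nonneg hfx _) ha₀, ← Real.rpow_mul hfx,
          neg_mul]
    _ ≤ (∫⁻ x in {x | ρ ≤ f x}, ENNReal.ofReal (f x ^ (-s)) ∂μ) ^ a * μ {x | ρ ≤ f x} ^ (1 - a) := by
        simpa only [Measure.restrict_apply_univ] using
          lintegral_rpow_le_mul_measure_univ_rpow (μ := μ.restrict _) (hf.pow_const (-s)).ennreal_ofReal.aemeasurable
            ha₀ (sub_nonneg.2 ha₁) (add_sub_cancel a 1)
    _ ≤ _ := by
        gcongr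
        exact setLIntegral_rpow_neg_le hf hρ hs hks hμ

end TailDecay

theorem decay_holder_estimate_general (n : ℕ) (Θ ρ γ : ℝ)
    (hΘ : 0 < Θ) (hρ : 1 ≤ ρ) (hγ : γ ∈ Set.Ioc (0 : ℝ) 1)
    (μ : Measure (EuclideanSpace ℝ (Fin n)))
    (hfin : μ {x | ρ ≤ ‖x‖} < ⊤)
    (hμ : ∀ r, ρ ≤ r →
      μ {x | ρ ≤ ‖x‖ ∧ ‖x‖ ≤ r} ≤ ENNReal.ofReal (Θ * r ^ ((n : ℝ) - 1)))
    (β : ℝ) (hβ : β ∈ Set.Ioo (0 : ℝ) ((n : ℝ) - 2 + γ)) :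
    ∫⁻ x in {x | ρ ≤ ‖x‖}, ENNReal.ofReal (‖x‖ ^ (-((n : ℝ) - 2 + γ))) ∂μ ≤
      ENNReal.ofReal (ρ ^ (-β)
        * (μ {x | ρ ≤ ‖x‖}).toReal ^ ((1 - γ + β) / ((n : ℝ) - 1))
        * (((n : ℝ) - 2 + γ) * Θ / β) ^ (((n : ℝ) - 2 + γ - β) / ((n : ℝ) - 1))) := by
  obtain ⟨hβ0, hβq⟩ := hβ
  obtain ⟨-, hγ1⟩ := hγ
  set q := (n : ℝ) - 2 + γ
  set k := (n : ℝ) - 1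
  set a := (q - β) / k
  have hρ0 : 0 < ρ := one_pos.trans_le hρ
  have hk : 0 < k := by linarith
  have ha : 0 < a := div_pos (sub_pos.2 hβq) hk
  have hka : k * a = q - β := mul_div_cancel₀ _ hk.ne'
  have ha₁ : a ≤ 1 := by rw [div_le_one hk]; linarith
  have hb : 1 - a = (1 - γ + β) / k := by
    rw [eq_div_iff hk.ne', sub_mul, one_mul, mul_comm, hka]
    ring
  set s := q / a
  have hsa : s * a = q := div_mul_cancel₀ q ha.ne'
  have hks : k < s := by rw [lt_div_iff₀ ha, hka]; linarith
  have hcoef : s / (s - k) = q / β := by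
    rw [← mul_div_mul_right s (s - k) ha.ne', sub_mul, hsa, hka]
    congr 1
    ring
  have hexp : (k - s) * a = -β := by rw [sub_mul, hsa, hka]; ring
  have hq : 0 < q := hβ0.trans hβq
  have hY : 0 ≤ q / β * Θ * ρ ^ (k - s) := by positivity
  calc _ = ∫⁻ x in {x | ρ ≤ ‖x‖}, ENNReal.ofReal (‖x‖ ^ (-(s * a))) ∂μ := by rw [hsa]
    _ ≤ _ := setLIntegral_rpow_neg_mul_le measurable_norm hρ0 (hk.trans hks) hks hμ ha.le ha₁
    _ = _ := by
      nth_rw 1 [← ofReal_toReal hfin.ne]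
      rw [hcoef, ENNReal.ofReal_rpow_of_nonneg hY ha.le,
        ENNReal.ofReal_rpow_of_nonneg toReal_nonneg (sub_nonneg.2 ha₁), hb,
        ← ENNReal.ofReal_mul (Real.rpow_nonneg hY _),
        Real.mul_rpow (by positivity) (Real.rpow_nonneg hρ0.le _), ← Real.rpow_mul hρ0.le, hexp]
      ring_nf

/-- Decay estimate with Hölder: under the annulus growth bound, the integral of
`|x|^{−(n−2+γ)}` over `{|x| ≥ ρ}` is controlled by a power of the total mass. -/
theorem decay_holder_estimate (n : ℕ) (hn : 3 ≤ n) (Θ ρ γ : ℝ)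
    (hΘ : 0 < Θ) (hρ : 1 ≤ ρ) (hγ : γ ∈ Set.Ioc (0 : ℝ) 1)
    (μ : Measure (EuclideanSpace ℝ (Fin n)))
    (hfin : μ {x | ρ ≤ ‖x‖} < ⊤)
    (hμ : ∀ r, ρ ≤ r →
      μ {x | ρ ≤ ‖x‖ ∧ ‖x‖ ≤ r} ≤ ENNReal.ofReal (Θ * r ^ ((n : ℝ) - 1)))
    (β : ℝ) (hβ : β ∈ Set.Ioo (0 : ℝ) ((n : ℝ) - 2 + γ)) :
    ∫⁻ x in {x | ρ ≤ ‖x‖}, ENNReal.ofReal (‖x‖ ^ (-((n : ℝ) - 2 + γ))) ∂μ ≤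
      ENNReal.ofReal (ρ ^ (-β)
        * (μ {x | ρ ≤ ‖x‖}).toReal ^ ((1 - γ + β) / ((n : ℝ) - 1))
        * (((n : ℝ) - 2 + γ) * Θ / β) ^ (((n : ℝ) - 2 + γ - β) / ((n : ℝ) - 1))) :=
  decay_holder_estimate_general n Θ ρ γ hΘ hρ hγ μ hfin hμ β hβ
end

section
/- Let n ≥ 3 be an integer, γ ∈ (0,1] and C ≥ 1. Let f, h : ℝⁿ → [0, ∞) be measurable functions such that f(x) ≥ 1/C and |f(x) − h(x)| ≤ C |x|^{2−n−γ} for all x with |x| ≥ 1, and let μ, ν be the measures on ℝⁿ with densities f and h with respect to Lebesgue measure. Then there exists C' ≥ 1, depending only on n and C, such that for every ρ ≥ 1, every bounded measurable set Ω ⊆ ℝⁿ, and every α ∈ (1, n−1+γ): | μ(Ω \ B_ρ) − ν(Ω \ B_ρ) | ≤ C' · ((n−1+γ−α)/(α−1))^{(n−1+γ−α)/n} · μ(Ω \ B_ρ)^{(1−γ+α)/n} · ρ^{1−α}. -/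
/-!
On `A = Ω \ B_ρ` the hypothesis gives `|f - h| ≤ C ρ^(1-α) |x|^(-β)` with `β = n - 1 + γ - α`,
so the two volumes differ by at most `C ρ^(1-α) ∫_A |x|^(-β)`. If `A` has Lebesgue volume `T`,
cut it at the radius `R = T^(1/n)`: the inner part lies in the annulus `1 ≤ |x| ≤ R`, where the
integral is computed in polar coordinates, and on the outer part `|x|^(-β) ≤ R^(-β)`; both pieces
are `O(T^((n-β)/n))`. Since `f ≥ 1/C`, `T ≤ C μ(A)`. Finally the factor
`((n-1+γ-α)/(α-1))^(β/n)` is bounded below by `1/(3(n-1))`, because `x log x ≥ -1`.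
-/

open MeasureTheory Metric Set Module

theorem integrableOn_norm_rpow_neg {E : Type*} [NormedAddCommGroup E] [MeasurableSpace E]
    [OpensMeasurableSpace E] (μ : Measure E) {β : ℝ} (hβ : 0 ≤ β) {S : Set E}
    (hS : MeasurableSet S) (hSfin : μ S ≠ ⊤) (hS1 : ∀ x ∈ S, 1 ≤ ‖x‖) :
    IntegrableOn (fun x ↦ ‖x‖ ^ (-β)) S μ := by
  refine Measure.integrableOn_of_bounded (M := 1) hSfin
    (measurable_norm.pow_const _).aestronglyMeasurable ?_
  filter_upwards [ae_restrict_mem hS] with x hx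
  rw [Real.norm_of_nonneg (by positivity)]
  exact Real.rpow_le_one_of_one_le_of_nonpos (hS1 x hx) (neg_nonpos.2 hβ)

theorem Real.rpow_add_le_mul_rpow_of_le {ρ r a b : ℝ} (hρ : 0 < ρ) (hρr : ρ ≤ r) (ha : a ≤ 0) :
    r ^ (a + b) ≤ ρ ^ a * r ^ b := by
  rw [Real.rpow_add (hρ.trans_le hρr)]
  exact mul_le_mul_of_nonneg_right (Real.rpow_le_rpow_of_nonpos hρ hρr ha)
    (Real.rpow_nonneg (hρ.le.trans hρr) b)

theorem Real.rpow_le_mul_rpow_of_le_mul {T M C q : ℝ} (hT : 0 ≤ T) (hTM : T ≤ C * M) (hC : 1 ≤ C)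
    (hq0 : 0 ≤ q) (hq1 : q ≤ 1) : T ^ q ≤ C * M ^ q := by
  have hM : 0 ≤ M := nonneg_of_mul_nonneg_right (hT.trans hTM) (by linarith)
  calc T ^ q ≤ (C * M) ^ q := Real.rpow_le_rpow hT hTM hq0
    _ = C ^ q * M ^ q := Real.mul_rpow (by linarith) hM
    _ ≤ C * M ^ q := by gcongr; exact Real.rpow_le_self_of_one_le hC hq1

theorem Real.one_div_three_le_rpow_self_div {x p : ℝ} (hx : 0 < x) (hp : 1 ≤ p) :
    1 / 3 ≤ x ^ (x / p) := by
  have hlog : -1 ≤ Real.log x * (x / p) := by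
    rw [mul_div_assoc', le_div_iff₀ (by linarith)]
    nlinarith [Real.self_sub_one_le_mul_log hx.le]
  calc (1 : ℝ) / 3 ≤ Real.exp (-1) := by linarith [Real.exp_neg_one_gt_d9]
    _ ≤ Real.exp (Real.log x * (x / p)) := Real.exp_le_exp.2 hlog
    _ = x ^ (x / p) := (Real.rpow_def_of_pos hx _).symm

theorem Real.one_div_three_mul_le_div_rpow {β δ n : ℝ} (hβ0 : 0 < β) (hβ : β ≤ n - 1)
    (hδ0 : 0 < δ) (hδ : δ ≤ n - 1) (hn : 2 ≤ n) :
    1 / (3 * (n - 1)) ≤ (β / δ) ^ (β / n) := by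
  have hδpow : δ ^ (β / n) ≤ n - 1 :=
    (Real.rpow_le_rpow hδ0.le hδ (by positivity)).trans
      (Real.rpow_le_self_of_one_le (by linarith) ((div_le_one (by linarith)).2 (by linarith)))
  rw [Real.div_rpow hβ0.le hδ0.le, ← div_div]
  gcongr
  exact Real.one_div_three_le_rpow_self_div hβ0 (by linarith)

theorem toReal_withDensity_ofReal_apply {α : Type*} [MeasurableSpace α] {μ : Measure α}
    [SFinite μ] {f : α → ℝ} {s : Set α} (hf : AEStronglyMeasurable f (μ.restrict s))
    (hf0 : 0 ≤ᵐ[μ.restrict s] f) :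
    (μ.withDensity (fun x ↦ ENNReal.ofReal (f x)) s).toReal = ∫ x in s, f x ∂μ := by
  rw [withDensity_apply', integral_eq_lintegral_of_nonneg_ae hf0 hf]

section Radial

variable {E : Type*} [NormedAddCommGroup E] [NormedSpace ℝ E] [FiniteDimensional ℝ E]
  [MeasurableSpace E] [BorelSpace E] [Nontrivial E] (μ : Measure E) [μ.IsAddHaarMeasure]

theorem setIntegral_closedBall_diff_ball_norm_rpow_neg {β R : ℝ} (hβ : β ≠ finrank ℝ E)
    (hR : 1 ≤ R) :
    ∫ x in closedBall (0 : E) R \ ball 0 1, ‖x‖ ^ (-β) ∂μ =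
      finrank ℝ E * μ.real (ball 0 1) * ((R ^ (finrank ℝ E - β) - 1) / (finrank ℝ E - β)) := by
  have hS : closedBall (0 : E) R \ ball 0 1 = (‖·‖) ⁻¹' Icc 1 R := by
    ext x; simp [and_comm]
  have hradial : ∀ y ∈ Ioi (0 : ℝ),
      y ^ (finrank ℝ E - 1) • (Icc 1 R).indicator (fun r ↦ r ^ (-β)) y =
        (Icc 1 R).indicator (fun r ↦ r ^ ((finrank ℝ E : ℝ) - 1 - β)) y := by
    intro y hy
    by_cases hyR : y ∈ Icc 1 R
    · rw [indicator_of_mem hyR, indicator_of_mem hyR, smul_eq_mul, ← Real.rpow_natCast,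
        ← Real.rpow_add hy, Nat.cast_sub finrank_pos]
      ring_nf
    · simp [hyR]
  have hind : ∀ x : E, (Icc 1 R).indicator (fun r ↦ r ^ (-β)) ‖x‖ =
      ((‖·‖) ⁻¹' Icc 1 R).indicator (fun x ↦ ‖x‖ ^ (-β)) x := fun x ↦
    (indicator_comp_right (‖·‖)).symm
  rw [hS, ← integral_indicator (measurableSet_Icc.preimage measurable_norm),
    ← integral_congr_ae (ae_of_all μ hind),
    integral_fun_norm_addHaar μ, setIntegral_congr_fun measurableSet_Ioi hradial,
    integral_indicator measurableSet_Icc, Measure.restrict_restrict measurableSet_Icc,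
    inter_eq_self_of_subset_left ((Icc_subset_Ioi_iff hR).2 zero_lt_one),
    integral_Icc_eq_integral_Ioc, ← intervalIntegral.integral_of_le hR,
    integral_rpow (Or.inr ⟨by contrapose! hβ; linarith, ?_⟩)]
  · simp only [nsmul_eq_mul, smul_eq_mul, Real.one_rpow]
    ring_nf
  simp [uIcc_of_le hR]

theorem setIntegral_closedBall_diff_ball_norm_rpow_neg_le {β R : ℝ}
    (hβ : β ≤ finrank ℝ E - 1) (hR : 0 ≤ R) :
    ∫ x in closedBall (0 : E) R \ ball 0 1, ‖x‖ ^ (-β) ∂μ ≤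
      finrank ℝ E * μ.real (ball 0 1) * R ^ (finrank ℝ E - β) := by
  rcases lt_or_ge R 1 with hR1 | hR1
  · rw [sdiff_eq_empty.2 (closedBall_subset_ball hR1), setIntegral_empty]
    positivity
  rw [setIntegral_closedBall_diff_ball_norm_rpow_neg μ (by linarith) hR1]
  have hRpow : 1 ≤ R ^ (finrank ℝ E - β) := Real.one_le_rpow hR1 (by linarith)
  gcongr
  rw [div_le_iff₀ (by linarith)]
  nlinarith

theorem setIntegral_norm_rpow_neg_le {β : ℝ} (hβ0 : 0 ≤ β) (hβ : β ≤ finrank ℝ E - 1)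
    {A : Set E} (hA : MeasurableSet A) (hAfin : μ A ≠ ⊤) (hA1 : ∀ x ∈ A, 1 ≤ ‖x‖) :
    ∫ x in A, ‖x‖ ^ (-β) ∂μ ≤
      (1 + finrank ℝ E * μ.real (ball 0 1)) * μ.real A ^ ((finrank ℝ E - β) / finrank ℝ E) := by
  set d : ℝ := (finrank ℝ E : ℝ)
  have hd : 0 < d := Nat.cast_pos.2 finrank_pos
  set T := μ.real A
  rcases measureReal_nonneg.eq_or_lt with hT | hT
  · rw [setIntegral_measure_zero _ ((measureReal_eq_zero_iff hAfin).1 hT.symm)]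
    positivity
  set R := T ^ d⁻¹
  have hR : 0 < R := by positivity
  have hRpow : R ^ (d - β) = T ^ ((d - β) / d) := by
    rw [← Real.rpow_mul hT.le, div_eq_inv_mul]
  have hRpow' : R ^ (-β) * T = T ^ ((d - β) / d) := by
    rw [← Real.rpow_mul hT.le, ← Real.rpow_add_one hT.ne']
    congr 1
    field_simp
    ring
  have hnear : ∫ x in A ∩ closedBall 0 R, ‖x‖ ^ (-β) ∂μ ≤ d * μ.real (ball 0 1) * R ^ (d - β) := by
    refine (setIntegral_mono_set ?_ (ae_of_all _ fun x ↦ by positivity)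
      (LE.le.eventuallyLE ?_)).trans
      (setIntegral_closedBall_diff_ball_norm_rpow_neg_le μ hβ hR.le)
    · exact integrableOn_norm_rpow_neg μ hβ0 (measurableSet_closedBall.diff measurableSet_ball)
        (measure_ne_top_of_subset sdiff_subset measure_closedBall_lt_top.ne)
        fun x hx ↦ by simpa using hx.2
    · exact fun x hx ↦ ⟨hx.2, by simpa using hA1 x hx.1⟩
  have hfar : ∫ x in A \ closedBall 0 R, ‖x‖ ^ (-β) ∂μ ≤ R ^ (-β) * T := by
    calc _ ≤ ‖∫ x in A \ closedBall 0 R, ‖x‖ ^ (-β) ∂μ‖ := Real.le_norm_self _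
      _ ≤ R ^ (-β) * μ.real (A \ closedBall 0 R) :=
        norm_setIntegral_le_of_norm_le_const
          (measure_ne_top_of_subset sdiff_subset hAfin).lt_top fun x hx ↦ ?_
      _ ≤ R ^ (-β) * T := by gcongr; exact measureReal_mono sdiff_subset hAfin
    have hxR : R < ‖x‖ := by simpa using hx.2
    rw [Real.norm_of_nonneg (by positivity)]
    exact Real.rpow_le_rpow_of_nonpos hR hxR.le (by linarith)
  rw [← integral_inter_add_sdiff measurableSet_closedBall
    (integrableOn_norm_rpow_neg μ hβ0 hA hAfin hA1)]
  calc _ ≤ d * μ.real (ball 0 1) * R ^ (d - β) + R ^ (-β) * T := add_le_add hnear hfar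
    _ = _ := by rw [hRpow, hRpow']; ring

theorem abs_setIntegral_sub_le_of_abs_sub_le {β c C : ℝ} (hβ0 : 0 ≤ β)
    (hβ : β ≤ finrank ℝ E - 1) (hc : 0 ≤ c) (hC : 1 ≤ C) {A : Set E} (hA : MeasurableSet A)
    (hAfin : μ A ≠ ⊤) (hA1 : ∀ x ∈ A, 1 ≤ ‖x‖) {f h : E → ℝ}
    (hf : AEStronglyMeasurable f (μ.restrict A)) (hh : AEStronglyMeasurable h (μ.restrict A))
    (hfC : ∀ x ∈ A, 1 / C ≤ f x) (hfh : ∀ x ∈ A, |f x - h x| ≤ c * ‖x‖ ^ (-β)) :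
    |∫ x in A, f x ∂μ - ∫ x in A, h x ∂μ| ≤ C * c * (1 + finrank ℝ E * μ.real (ball 0 1)) *
      (∫ x in A, f x ∂μ) ^ ((finrank ℝ E - β) / finrank ℝ E) := by
  have hd : (0 : ℝ) < finrank ℝ E := Nat.cast_pos.2 finrank_pos
  have hq0 : 0 < ((finrank ℝ E : ℝ) - β) / finrank ℝ E := div_pos (by linarith) hd
  have hq1 : ((finrank ℝ E : ℝ) - β) / finrank ℝ E ≤ 1 := (div_le_one hd).2 (by linarith)
  have hnorm := integrableOn_norm_rpow_neg μ hβ0 hA hAfin hA1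
  have hdiff : IntegrableOn (fun x ↦ f x - h x) A μ :=
    Integrable.mono' (hnorm.const_mul c) (hf.sub hh)
      ((ae_restrict_iff' hA).2 (ae_of_all _ fun x hx ↦ (Real.norm_eq_abs _).trans_le (hfh x hx)))
  by_cases hfi : IntegrableOn f A μ
  swap
  · -- then `h` is not integrable either, and both integrals take the junk value `0`
    have hhi : ¬IntegrableOn h A μ := fun hhi ↦
      hfi ((hhi.add hdiff).congr_fun (fun x _ ↦ by simp) hA)
    rw [integral_undef hfi, integral_undef hhi, Real.zero_rpow hq0.ne']
    simp
  have hhi : IntegrableOn h A μ := (hfi.sub hdiff).congr_fun (fun x _ ↦ by simp) hA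
  have hvol : μ.real A ≤ C * ∫ x in A, f x ∂μ := by
    have := setIntegral_ge_of_const_le_real hA hAfin hfC hfi
    rw [one_div_mul_eq_div, div_le_iff₀ (by linarith)] at this
    linarith
  calc |∫ x in A, f x ∂μ - ∫ x in A, h x ∂μ| = |∫ x in A, (f x - h x) ∂μ| := by
        rw [integral_sub hfi hhi]
    _ ≤ ∫ x in A, |f x - h x| ∂μ := abs_integral_le_integral_abs
    _ ≤ ∫ x in A, c * ‖x‖ ^ (-β) ∂μ := setIntegral_mono_on hdiff.abs (hnorm.const_mul c) hA hfh
    _ = c * ∫ x in A, ‖x‖ ^ (-β) ∂μ := integral_const_mul _ _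
    _ ≤ c * ((1 + finrank ℝ E * μ.real (ball 0 1)) *
          μ.real A ^ (((finrank ℝ E : ℝ) - β) / finrank ℝ E)) := by
        gcongr
        exact setIntegral_norm_rpow_neg_le μ hβ0 hβ hA hAfin hA1
    _ ≤ c * ((1 + finrank ℝ E * μ.real (ball 0 1)) *
          (C * (∫ x in A, f x ∂μ) ^ (((finrank ℝ E : ℝ) - β) / finrank ℝ E))) := by
        gcongr
        exact Real.rpow_le_mul_rpow_of_le_mul measureReal_nonneg hvol hC hq0.le hq1
    _ = _ := by ring

end Radial

/-- Volume comparison: if two densities `f, h` on `ℝⁿ` satisfy `f ≥ 1/C` and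
`|f − h| ≤ C |x|^{2−n−γ}` for `|x| ≥ 1`, then the measures with these densities assign
comparable volumes to `Ω \ B_ρ`, with a quantitative error depending only on `n` and `C`. -/
theorem volume_comparison (n : ℕ) (hn : 3 ≤ n) (C : ℝ) (hC : 1 ≤ C) :
    ∃ C' : ℝ, 1 ≤ C' ∧
      ∀ (γ : ℝ), γ ∈ Set.Ioc (0 : ℝ) 1 →
      ∀ (f h : EuclideanSpace ℝ (Fin n) → ℝ),
        Measurable f → Measurable h →
        (∀ x, 0 ≤ f x) → (∀ x, 0 ≤ h x) →
        (∀ x : EuclideanSpace ℝ (Fin n), 1 ≤ ‖x‖ → 1 / C ≤ f x) →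
        (∀ x : EuclideanSpace ℝ (Fin n), 1 ≤ ‖x‖ →
          |f x - h x| ≤ C * ‖x‖ ^ ((2 : ℝ) - (n : ℝ) - γ)) →
      ∀ (ρ : ℝ), 1 ≤ ρ →
      ∀ (Ω : Set (EuclideanSpace ℝ (Fin n))), MeasurableSet Ω → Bornology.IsBounded Ω →
      ∀ (α : ℝ), α ∈ Set.Ioo (1 : ℝ) ((n : ℝ) - 1 + γ) →
        letI μ := volume.withDensity (fun x => ENNReal.ofReal (f x))
        letI ν := volume.withDensity (fun x => ENNReal.ofReal (h x))
        letI A := Ω \ Metric.closedBall (0 : EuclideanSpace ℝ (Fin n)) ρ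
        |(μ A).toReal - (ν A).toReal| ≤
          C' * (((n : ℝ) - 1 + γ - α) / (α - 1)) ^ (((n : ℝ) - 1 + γ - α) / (n : ℝ))
            * (μ A).toReal ^ ((1 - γ + α) / (n : ℝ)) * ρ ^ (1 - α) := by
  have : NeZero n := ⟨by omega⟩
  have hn' : (3 : ℝ) ≤ n := by exact_mod_cast hn
  set K := 1 + n * volume.real (ball (0 : EuclideanSpace ℝ (Fin n)) 1)
  have hK : 1 ≤ K := le_add_of_nonneg_right (by positivity)
  refine ⟨3 * (n - 1) * C ^ 2 * K, one_le_mul_of_one_le_of_one_le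
    (one_le_mul_of_one_le_of_one_le (by linarith) (one_le_pow₀ hC)) hK, ?_⟩
  intro γ ⟨hγ0, hγ1⟩ f h hf hh hf0 hh0 hfC hfh ρ hρ Ω hΩ hΩb α ⟨hα1, hα⟩
  have hAρ : ∀ x ∈ Ω \ closedBall 0 ρ, ρ < ‖x‖ := fun x hx ↦ by simpa using hx.2
  have hA1 : ∀ x ∈ Ω \ closedBall 0 ρ, 1 ≤ ‖x‖ := fun x hx ↦ hρ.trans (hAρ x hx).le
  have hdiff : ∀ x ∈ Ω \ closedBall 0 ρ,
      |f x - h x| ≤ C * ρ ^ (1 - α) * ‖x‖ ^ (-(n - 1 + γ - α)) := fun x hx ↦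
    calc |f x - h x| ≤ C * ‖x‖ ^ ((1 - α) + -(n - 1 + γ - α)) := by
          convert hfh x (hA1 x hx) using 3; ring
      _ ≤ C * (ρ ^ (1 - α) * ‖x‖ ^ (-(n - 1 + γ - α))) := by
          gcongr; exact Real.rpow_add_le_mul_rpow_of_le (by linarith) (hAρ x hx).le (by linarith)
      _ = _ := (mul_assoc _ _ _).symm
  have hcmp := abs_setIntegral_sub_le_of_abs_sub_le volume (by linarith) (by simp; linarith)
    (by positivity) hC (hΩ.diff measurableSet_closedBall)
    (hΩb.subset sdiff_subset).measure_lt_top.ne hA1 hf.aestronglyMeasurable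
    hh.aestronglyMeasurable (fun x hx ↦ hfC x (hA1 x hx)) hdiff
  rw [finrank_euclideanSpace_fin, show (n : ℝ) - (n - 1 + γ - α) = 1 - γ + α by ring] at hcmp
  rw [toReal_withDensity_ofReal_apply hf.aestronglyMeasurable (ae_of_all _ hf0),
    toReal_withDensity_ofReal_apply hh.aestronglyMeasurable (ae_of_all _ hh0)]
  have hfactor := Real.one_div_three_mul_le_div_rpow (β := n - 1 + γ - α) (δ := α - 1) (n := n)
    (by linarith) (by linarith) (by linarith) (by linarith) (by linarith)
  set M := ∫ x in Ω \ closedBall 0 ρ, f x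
  have hM : 0 ≤ M := integral_nonneg fun x ↦ hf0 x
  have hn1 : (0 : ℝ) < n - 1 := by linarith
  calc _ ≤ C * (C * ρ ^ (1 - α)) * K * M ^ ((1 - γ + α) / n) := hcmp
    _ = 3 * (n - 1) * C ^ 2 * K * (1 / (3 * (n - 1))) * M ^ ((1 - γ + α) / n) * ρ ^ (1 - α) := by
        field_simp
    _ ≤ _ := by gcongr
end

section
/- Let n ≥ 3 be an integer, a < b real numbers, and ρ : (a,b) → (0,∞) a twice differentiable function with ρ'(r) ≥ 0 for all r, satisfying 2 ρ(r) ρ''(r) ≤ (n−2)(1 − ρ'(r)²) for all r ∈ (a,b). Then the function m(r) := ρ(r)^{n−2} (1 − ρ'(r)²) is non-decreasing on (a,b). -/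
/-!
Writing `m = ρ^{n-2} (1 - ρ'²)`, the product rule factors the derivative as
`m' = ρ^{n-3} ρ' ((n-2)(1 - ρ'²) - 2 ρ ρ'')`: the first two factors are non-negative because `ρ > 0`
and `ρ' ≥ 0`, and the last one is non-negative by the scalar curvature condition.
-/

theorem hasDerivAt_pow_succ_mul_one_sub_deriv_sq {f f' f'' : ℝ → ℝ} {x : ℝ} (k : ℕ)
    (hf : HasDerivAt f (f' x) x) (hf' : HasDerivAt f' (f'' x) x) :
    HasDerivAt (fun r => f r ^ (k + 1) * (1 - f' r ^ 2))
      (f x ^ k * f' x * ((k + 1) * (1 - f' x ^ 2) - 2 * f x * f'' x)) x := by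
  refine ((hf.fun_pow (k + 1)).fun_mul ((hf'.fun_pow 2).const_sub 1)).congr_deriv ?_
  push_cast
  ring

theorem hawking_mass_monotone_general (n : ℕ) (hn : 3 ≤ n) (a b : ℝ)
    (ρ ρ' ρ'' : ℝ → ℝ)
    (hρpos : ∀ r ∈ Set.Ioo a b, 0 < ρ r)
    (hd1 : ∀ r ∈ Set.Ioo a b, HasDerivAt ρ (ρ' r) r)
    (hd2 : ∀ r ∈ Set.Ioo a b, HasDerivAt ρ' (ρ'' r) r)
    (hmono : ∀ r ∈ Set.Ioo a b, 0 ≤ ρ' r)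
    (hscal : ∀ r ∈ Set.Ioo a b, 2 * ρ r * ρ'' r ≤ ((n : ℝ) - 2) * (1 - ρ' r ^ 2)) :
    MonotoneOn (fun r => ρ r ^ (n - 2) * (1 - ρ' r ^ 2)) (Set.Ioo a b) := by
  obtain ⟨k, rfl⟩ : ∃ k, n = k + 3 := ⟨n - 3, by omega⟩
  have hderiv : ∀ r ∈ Set.Ioo a b, HasDerivAt (fun r => ρ r ^ (k + 1) * (1 - ρ' r ^ 2))
      (ρ r ^ k * ρ' r * ((k + 1) * (1 - ρ' r ^ 2) - 2 * ρ r * ρ'' r)) r :=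
    fun r hr => hasDerivAt_pow_succ_mul_one_sub_deriv_sq k (hd1 r hr) (hd2 r hr)
  refine monotoneOn_of_hasDerivWithinAt_nonneg (convex_Ioo a b)
    (fun r hr => (hderiv r hr).continuousAt.continuousWithinAt)
    (fun r hr => (hderiv r (interior_subset hr)).hasDerivWithinAt) fun r hr => ?_
  rw [interior_Ioo] at hr
  have hcurv := hscal r hr
  push_cast at hcurv
  exact mul_nonneg (mul_nonneg (pow_pos (hρpos r hr) k).le (hmono r hr)) (by linarith)

/-- Monotonicity of the higher-dimensional Hawking mass in arclength gauge: if `ρ > 0` is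
non-decreasing and `2 ρ ρ'' ≤ (n−2)(1 − ρ'²)` (non-negative scalar curvature), then
`m(r) = ρ^{n−2} (1 − ρ'²)` is non-decreasing. -/
theorem hawking_mass_monotone (n : ℕ) (hn : 3 ≤ n) (a b : ℝ) (hab : a < b)
    (ρ ρ' ρ'' : ℝ → ℝ)
    (hρpos : ∀ r ∈ Set.Ioo a b, 0 < ρ r)
    (hd1 : ∀ r ∈ Set.Ioo a b, HasDerivAt ρ (ρ' r) r)
    (hd2 : ∀ r ∈ Set.Ioo a b, HasDerivAt ρ' (ρ'' r) r)
    (hmono : ∀ r ∈ Set.Ioo a b, 0 ≤ ρ' r)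
    (hscal : ∀ r ∈ Set.Ioo a b, 2 * ρ r * ρ'' r ≤ ((n : ℝ) - 2) * (1 - ρ' r ^ 2)) :
    MonotoneOn (fun r => ρ r ^ (n - 2) * (1 - ρ' r ^ 2)) (Set.Ioo a b) :=
  hawking_mass_monotone_general n hn a b ρ ρ' ρ'' hρpos hd1 hd2 hmono hscal
end
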